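/- Let k be a field and let p, q ∈ k be algebraically independent over the prime subfield of k. Let σ be the automorphism of ℙ² given by σ(a : b : c) = (pa : qb : c) and let c = (1 : 1 : 1) ∈ ℙ². Then the orbit 𝒞 = {σ^{−i}(c) : i ∈ ℕ} = {(p^{−i} : q^{−i} : 1) : i ∈ ℕ} is critically dense in ℙ²: every infinite subset of 𝒞 is Zariski dense in ℙ². Equivalently, if f ∈ k[x₀, x₁, x₂] is a homogeneous polynomial such that f(p^{−i}, q^{−i}, 1) = 0 for infinitely many i ∈ ℕ, then f = 0. -/

import Mathlib

/-!
Multiplying by `p ^ (d i) * q ^ (d i)`, the vanishing of `f` at `(p⁻ⁱ, q⁻ⁱ, 1)` for `n` values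
`i₁, …, iₙ` of `i`, where `n` is the number of monomials of `f`, says that the coefficient vector
of `f` lies in the left kernel of the matrix `((p ^ iₗ) ^ aⱼ * (q ^ iₗ) ^ bⱼ)`, with
`(aⱼ, bⱼ) = (d - νⱼ 0, d - νⱼ 1)` distinct. By algebraic independence this determinant is nonzero
as soon as the same determinant in `F[X, Y]` is. Substituting `X = t ^ K`, `Y = t` turns the latter
into a generalized Vandermonde determinant `det (t ^ (Wⱼ * iₗ))` with distinct `Wⱼ`, whose
coefficient of `t ^ (∑ Wⱼ * iⱼ)` (after sorting both sequences) is `1` by the rearrangement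
inequality.
-/

open Matrix Function Polynomial

namespace Polynomial

variable {R : Type*} [CommRing R] {n : ℕ}

theorem coeff_det_X_pow_mul_of_strictMono {W I : Fin n → ℕ} (hW : StrictMono W)
    (hI : StrictMono I) :
    (of fun j l => (X : R[X]) ^ (W j * I l)).det.coeff (∑ j, W j * I j) = 1 := by
  classical
  rw [det_apply, finsetSum_coeff, Finset.sum_eq_single_of_mem 1 (Finset.mem_univ _)]
  · simp [Finset.prod_pow_eq_pow_sum, coeff_X_pow]
  · intro π _ hπ
    -- rearrangement inequality: only the identity pairs the two increasing sequences
    have hlt : ∑ j, W (π j) * I j < ∑ j, W j * I j := by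
      refine (hW.monotone.monovary hI.monotone).sum_comp_perm_mul_lt_sum_mul_iff.mpr
        fun hcon => hπ ?_
      have hπmono : StrictMono π := fun a b hab =>
        (hW.le_iff_le.mp (hcon (hI hab))).lt_of_ne (π.injective.ne hab.ne)
      exact Equiv.ext (congrFun ((hπmono.range_inj strictMono_id).mp
        (by rw [Set.range_id, Equiv.range_eq_univ])))
    simp only [of_apply, Finset.prod_pow_eq_pow_sum, coeff_smul, coeff_X_pow, hlt.ne', if_false,
      smul_zero]

theorem det_X_pow_mul_ne_zero [Nontrivial R] {W I : Fin n → ℕ} (hW : Injective W)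
    (hI : Injective I) :
    (of fun j l => (X : R[X]) ^ (W j * I l)).det ≠ 0 := by
  set σ := Tuple.sort W
  set τ := Tuple.sort I
  have hWσ : StrictMono (W ∘ σ) := (Tuple.monotone_sort W).strictMono_of_injective
    (hW.comp σ.injective)
  have hIτ : StrictMono (I ∘ τ) := (Tuple.monotone_sort I).strictMono_of_injective
    (hI.comp τ.injective)
  intro h
  have hsorted := coeff_det_X_pow_mul_of_strictMono (R := R) hWσ hIτ
  have hperm : (of fun j l => (X : R[X]) ^ ((W ∘ σ) j * (I ∘ τ) l)) =
      ((of fun j l => (X : R[X]) ^ (W j * I l)).submatrix σ id).submatrix id τ := rfl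
  rw [hperm, det_permute', det_permute, h] at hsorted
  simp at hsorted

end Polynomial

theorem MvPolynomial.det_X_pow_mul_X_pow_ne_zero {R : Type*} [CommRing R] [Nontrivial R]
    {n : ℕ} {a b : Fin n → ℕ} (hab : Injective fun j => (a j, b j)) {I : Fin n → ℕ}
    (hI : Injective I) :
    (of fun j l => (X 0 : MvPolynomial (Fin 2) R) ^ (a j * I l) * X 1 ^ (b j * I l)).det ≠ 0 := by
  -- `X₀ ↦ t ^ K, X₁ ↦ t` with `K > b j` turns the distinct exponent pairs into distinct exponents
  set K := Finset.univ.sup b + 1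
  have hbK (j : Fin n) : b j < K := Nat.lt_succ_of_le (Finset.le_sup (Finset.mem_univ j))
  have hW : Injective fun j => a j * K + b j := by
    have hdivmod (j : Fin n) : (a j * K + b j) / K = a j ∧ (a j * K + b j) % K = b j :=
      (Nat.div_mod_unique (by omega)).mpr ⟨by ring, hbK j⟩
    intro i j h
    have hi := hdivmod i
    have hj := hdivmod j
    simp only at h
    rw [h] at hi
    exact hab (Prod.ext (hi.1.symm.trans hj.1) (hi.2.symm.trans hj.2))
  intro h
  apply Polynomial.det_X_pow_mul_ne_zero (R := R) hW hI
  have hψ := congrArg (aeval ![(Polynomial.X : R[X]) ^ K, Polynomial.X]) h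
  rw [AlgHom.map_det, map_zero] at hψ
  convert hψ using 2
  ext j l : 1
  simp only [of_apply, AlgHom.mapMatrix_apply, map_apply, map_mul, map_pow, aeval_X,
    Matrix.cons_val_zero, Matrix.cons_val_one, ← pow_mul, ← pow_add]
  ring_nf

theorem AlgebraicIndependent.det_pow_mul_pow_ne_zero {R A : Type*} [CommRing R] [Nontrivial R]
    [CommRing A] [Algebra R A] {x y : A} (hxy : AlgebraicIndependent R ![x, y]) {n : ℕ}
    {a b : Fin n → ℕ} (hab : Injective fun j => (a j, b j)) {I : Fin n → ℕ} (hI : Injective I) :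
    (of fun j l => (x ^ I l) ^ a j * (y ^ I l) ^ b j).det ≠ 0 := by
  have hmap : (of fun j l => (x ^ I l) ^ a j * (y ^ I l) ^ b j) =
      (MvPolynomial.aeval (R := R) ![x, y]).mapMatrix
        (of fun j l => (MvPolynomial.X 0 : MvPolynomial (Fin 2) R) ^ (a j * I l) *
          MvPolynomial.X 1 ^ (b j * I l)) := by
    ext j l
    simp [← pow_mul, mul_comm]
  rw [hmap, ← AlgHom.map_det, Ne, ← map_zero (MvPolynomial.aeval (R := R) ![x, y]), hxy.eq_iff]
  exact MvPolynomial.det_X_pow_mul_X_pow_ne_zero hab hI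

theorem MvPolynomial.IsHomogeneous.sum_fin_three_eq_of_mem_support {R : Type*} [CommSemiring R]
    {f : MvPolynomial (Fin 3) R} {d : ℕ} (hf : f.IsHomogeneous d) {ν : Fin 3 →₀ ℕ}
    (hν : ν ∈ f.support) : ν 0 + ν 1 + ν 2 = d := by
  rw [hf.degree_eq_sum_deg_support hν, ← Finsupp.degree_apply, Finsupp.degree_eq_sum,
    Fin.sum_univ_three]

theorem MvPolynomial.IsHomogeneous.eval_inv_mul_pow {K : Type*} [Field K]
    {f : MvPolynomial (Fin 3) K} {d : ℕ} (hf : f.IsHomogeneous d) {x y : K} (hx : x ≠ 0)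
    (hy : y ≠ 0) :
    eval ![x⁻¹, y⁻¹, 1] f * (x ^ d * y ^ d) =
      ∑ ν ∈ f.support, f.coeff ν * (x ^ (d - ν 0) * y ^ (d - ν 1)) := by
  rw [eval_eq', Finset.sum_mul]
  refine Finset.sum_congr rfl fun ν hν => ?_
  have hdeg := hf.sum_fin_three_eq_of_mem_support hν
  simp only [Fin.prod_univ_three, Matrix.cons_val_zero, Matrix.cons_val_one, Matrix.cons_val_two,
    Matrix.tail_cons, Matrix.head_cons, one_pow, mul_one, inv_pow]
  rw [pow_sub₀ x hx (by omega), pow_sub₀ y hy (by omega)]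
  ring

/-- Let `k` be a field and `p, q ∈ k` algebraically independent over
the prime subfield (the smallest subfield `⊥ : Subfield k`). Then the orbit
`𝒞 = {(p⁻ⁱ : q⁻ⁱ : 1) : i ∈ ℕ}` of `(1 : 1 : 1)` under `σ⁻¹`, where
`σ(a : b : c) = (pa : qb : c)`, is critically dense in `ℙ²`: any homogeneous polynomial
`f ∈ k[x₀, x₁, x₂]` vanishing at `(p⁻ⁱ, q⁻ⁱ, 1)` for infinitely many `i ∈ ℕ` is zero
(equivalently, every infinite subset of `𝒞` is Zariski dense in `ℙ²`). -/
theorem stmt9 (k : Type) [Field k] (p q : k)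
    (hind : AlgebraicIndependent (⊥ : Subfield k) ![p, q])
    (d : ℕ) (f : MvPolynomial (Fin 3) k) (hf : f.IsHomogeneous d)
    (hvan : {i : ℕ | MvPolynomial.eval ![p⁻¹ ^ i, q⁻¹ ^ i, 1] f = 0}.Infinite) :
    f = 0 := by
  classical
  by_contra hf0
  obtain ⟨ν₀, hν₀⟩ := Finset.nonempty_iff_ne_empty.mpr (mt MvPolynomial.support_eq_empty.mp hf0)
  set e := f.support.equivFin.symm
  set I : Fin f.support.card → ℕ := fun l => hvan.natEmbedding _ l
  have hI : Injective I :=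
    Subtype.val_injective.comp ((hvan.natEmbedding _).injective.comp Fin.val_injective)
  set a : Fin f.support.card → ℕ := fun j => d - (e j : Fin 3 →₀ ℕ) 0
  set b : Fin f.support.card → ℕ := fun j => d - (e j : Fin 3 →₀ ℕ) 1
  have hab : Injective fun j => (a j, b j) := by
    intro i j h
    have hi := hf.sum_fin_three_eq_of_mem_support (e i).2
    have hj := hf.sum_fin_three_eq_of_mem_support (e j).2
    simp only [a, b, Prod.mk.injEq] at h
    refine e.injective (Subtype.ext (Finsupp.ext fun r => ?_))
    match r with
    | 0 | 1 | 2 => omega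
  have hp : p ≠ 0 := by simpa using hind.ne_zero 0
  have hq : q ≠ 0 := by simpa using hind.ne_zero 1
  apply hind.det_pow_mul_pow_ne_zero hab hI
  rw [← exists_vecMul_eq_zero_iff]
  refine ⟨fun j => f.coeff (e j), fun h => ?_, ?_⟩
  · exact MvPolynomial.mem_support_iff.mp hν₀ (by simpa using congrFun h (e.symm ⟨ν₀, hν₀⟩))
  · ext l
    have hrow := hf.eval_inv_mul_pow (pow_ne_zero (I l) hp) (pow_ne_zero (I l) hq)
    rw [← inv_pow, ← inv_pow, (hvan.natEmbedding _ l).2, zero_mul, ← Finset.sum_coe_sort,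
      ← e.sum_comp] at hrow
    simpa [vecMul, dotProduct] using hrow.symm
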